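/- The function (x,y) ↦ τ(x/y) with domain (0,∞)² is convex in x for each fixed y > 0, and concave in y for each fixed x > 0, where τ(z) = (√(1/z) − 1)/(√(1/z) + 1). -/

import Mathlib

/-- The rho-estimator link function `τ(z) = (√(1/z) − 1)/(√(1/z) + 1)`. -/
noncomputable def tauFn (z : ℝ) : ℝ :=
  (Real.sqrt (1 / z) - 1) / (Real.sqrt (1 / z) + 1)

/-!
For `x, c > 0`, `τ(x/c) = 2√c / (√c + √x) − 1`, a positive multiple of the reciprocal of the
positive concave function `x ↦ √c + √x`, minus a constant; hence it is convex in `x`.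
Concavity in the denominator follows from the symmetry `τ(1/z) = −τ(z)`.
-/

open Set

theorem ConcaveOn.convexOn_inv {𝕜 E : Type*} [Field 𝕜] [LinearOrder 𝕜] [IsStrictOrderedRing 𝕜]
    [AddCommMonoid E] [Module 𝕜 E] {s : Set E} {f : E → 𝕜} (hf : ConcaveOn 𝕜 s f)
    (hpos : ∀ x ∈ s, 0 < f x) : ConvexOn 𝕜 s fun x => (f x)⁻¹ := by
  refine ⟨hf.1, fun x hx y hy a b ha hb hab => ?_⟩
  have hmix : 0 < a • f x + b • f y := convex_Ioi 0 (hpos x hx) (hpos y hy) ha hb hab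
  calc (f (a • x + b • y))⁻¹ ≤ (a • f x + b • f y)⁻¹ := inv_anti₀ hmix (hf.2 hx hy ha hb hab)
    _ ≤ a • (f x)⁻¹ + b • (f y)⁻¹ := by
      simpa using (convexOn_zpow (-1)).2 (hpos x hx) (hpos y hy) ha hb hab

theorem convexOn_inv_const_add_sqrt {a : ℝ} (ha : 0 ≤ a) :
    ConvexOn ℝ (Ioi 0) fun x => (a + √x)⁻¹ := by
  have hconc : ConcaveOn ℝ (Ioi 0) fun x => a + √x :=
    (concaveOn_const a (convex_Ioi 0)).add
      (Real.strictConcaveOn_sqrt.concaveOn.subset Ioi_subset_Ici_self (convex_Ioi 0))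
  exact hconc.convexOn_inv fun x hx => by have := Real.sqrt_pos.2 (mem_Ioi.1 hx); positivity

theorem tauFn_div {x c : ℝ} (hx : 0 < x) :
    tauFn (x / c) = 2 * √c * (√c + √x)⁻¹ - 1 := by
  have hsx := Real.sqrt_pos.2 hx
  rw [tauFn, one_div_div, Real.sqrt_div' _ hx.le]
  field_simp
  ring

theorem tauFn_inv {z : ℝ} (hz : 0 < z) : tauFn z⁻¹ = -tauFn z := by
  have hsz := Real.sqrt_pos.2 hz
  rw [tauFn, tauFn, one_div, one_div, inv_inv, Real.sqrt_inv]
  field_simp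
  ring

theorem convexOn_tauFn_div (c : ℝ) : ConvexOn ℝ (Ioi 0) fun x => tauFn (x / c) := by
  have h := ((convexOn_inv_const_add_sqrt (Real.sqrt_nonneg c)).smul
    (by positivity : (0 : ℝ) ≤ 2 * √c)).sub (concaveOn_const 1 (convex_Ioi 0))
  exact h.congr fun x hx => by simp [tauFn_div (mem_Ioi.1 hx), mul_assoc]

theorem tauFn_ratio_convex_concave :
    (∀ y : ℝ, 0 < y → ConvexOn ℝ (Set.Ioi (0 : ℝ)) (fun x => tauFn (x / y))) ∧
    (∀ x : ℝ, 0 < x → ConcaveOn ℝ (Set.Ioi (0 : ℝ)) (fun y => tauFn (x / y))) := by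
  refine ⟨fun y _ => convexOn_tauFn_div y, fun x hx => ?_⟩
  refine (convexOn_tauFn_div x).neg.congr fun y hy => ?_
  rw [Pi.neg_apply, ← tauFn_inv (div_pos (mem_Ioi.1 hy) hx), inv_div]
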